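/- arXiv:2408.14014 — 3 statements merged into one kernel-verified Lean document; each statement's English description precedes it below -/
import Mathlib

section
/- In a Cartesian reverse differential category, for maps f : A → B and g : B → C, the reverse derivative of the composite satisfies R[f ; g] = ⟨π₀, ⟨π₀ ; f, π₁⟩⟩ ; (1_A × R[g]) ; R[f] : A × C → A (the reverse chain rule), and hence the assignment f ↦ (f, R[f]) sending a morphism to the lens with forward part f and backward part R[f] is functorial from C to Lens(C): it preserves identities and composition of lenses. -/
open CategoryTheory Limits

variable {C : Type*} [Category C] [HasTerminal C] [HasBinaryProducts C]

/-- A lens `(A, A') → (B, B')`: a forward map and a backward map. -/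
structure Lens (C : Type*) [Category C] [HasTerminal C] [HasBinaryProducts C]
    (A A' B B' : C) where
  get : A ⟶ B
  put : A ⨯ B' ⟶ A'

/-- Lens composition. -/
noncomputable def lensComp {A A' B B' D D' : C} (l : Lens C A A' B B')
    (m : Lens C B B' D D') : Lens C A A' D D' where
  get := l.get ≫ m.get
  put := prod.lift prod.fst (prod.lift (prod.fst ≫ l.get) prod.snd ≫ m.put) ≫ l.put

/-- The identity lens. -/
noncomputable def lensId (A A' : C) : Lens C A A' A A' where
  get := 𝟙 A
  put := prod.snd

/-- In a Cartesian reverse differential category (a Cartesian left additive category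
with a reverse differential combinator `R` satisfying the CRDC axioms, including
`R[1] = π₁` and the reverse chain rule), the reverse chain rule
`R[f ; g] = ⟨π₀, ⟨π₀ ; f, π₁⟩⟩ ; (1_A × R[g]) ; R[f]` holds, and hence the assignment
`f ↦ (f, R[f])` is functorial from `C` to `Lens(C)`: it preserves identities and
composition of lenses. -/
theorem stmt_2
    [∀ X Y : C, AddCommMonoid (X ⟶ Y)]
    (R : ∀ {A B : C}, (A ⟶ B) → (A ⨯ B ⟶ A))
    (R_id : ∀ A : C, R (𝟙 A) = prod.snd)
    (R_chain : ∀ {A B D : C} (f : A ⟶ B) (g : B ⟶ D),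
      R (f ≫ g) =
        prod.lift prod.fst (prod.lift (prod.fst ≫ f) prod.snd) ≫
          prod.map (𝟙 A) (R g) ≫ R f) :
    (∀ {A B D : C} (f : A ⟶ B) (g : B ⟶ D),
      R (f ≫ g) =
        prod.lift prod.fst (prod.lift (prod.fst ≫ f) prod.snd) ≫
          prod.map (𝟙 A) (R g) ≫ R f) ∧
    (∀ A : C, (⟨𝟙 A, R (𝟙 A)⟩ : Lens C A A A A) = lensId A A) ∧
    (∀ {A B D : C} (f : A ⟶ B) (g : B ⟶ D),
      (⟨f ≫ g, R (f ≫ g)⟩ : Lens C A A D D) =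
        lensComp ⟨f, R f⟩ ⟨g, R g⟩) := by
  refine ⟨fun f g => R_chain f g, fun A => ?_, fun f g => ?_⟩
  · simp [lensId, R_id]
  · simp only [lensComp, R_chain f g]
    congr 1
    rw [← Category.assoc, prod.lift_map]
    simp
end

section
/- Maximal-linkage clustering at a fixed scale δ ≥ 0 is functorial: for a finite uber-metric space (X, d), the collection ML_δ(X) of maximal subsets S ⊆ X such that d(x, y) ≤ δ for all x, y ∈ S is a non-nested cover of X, and for every non-expansive map f : (X, d_X) → (Y, d_Y) and every S ∈ ML_δ(X), there exists S' ∈ ML_δ(Y) with f(S) ⊆ S' (i.e., f is refinement preserving). -/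
open scoped ENNReal

/-- `d` is an uber-metric on `X`. -/
def IsUber {X : Type} (d : X → X → ℝ≥0∞) : Prop :=
  (∀ x, d x x = 0) ∧ (∀ x y, d x y = d y x) ∧ ∀ x y z, d x z ≤ d x y + d y z

/-- Non-expansive maps. -/
def Nonexpansive {X Y : Type} (dX : X → X → ℝ≥0∞) (dY : Y → Y → ℝ≥0∞)
    (f : X → Y) : Prop :=
  ∀ x y, dY (f x) (f y) ≤ dX x y

/-- A `δ`-clique: all pairwise distances are at most `δ`. -/
def IsClique {X : Type} (d : X → X → ℝ≥0∞) (δ : ℝ) (S : Set X) : Prop :=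
  ∀ x ∈ S, ∀ y ∈ S, d x y ≤ ENNReal.ofReal δ

/-- Maximal-linkage clusters at scale `δ`: maximal `δ`-cliques. -/
def MLδ {X : Type} (d : X → X → ℝ≥0∞) (δ : ℝ) : Set (Set X) :=
  {S | IsClique d δ S ∧ ∀ T : Set X, S ⊆ T → IsClique d δ T → S = T}

lemma exists_max_clique {X : Type} (d : X → X → ℝ≥0∞) (δ : ℝ) (S : Set X)
    (hS : IsClique d δ S) :
    ∃ M, IsClique d δ M ∧ S ⊆ M ∧ ∀ T, M ⊆ T → IsClique d δ T → M = T := by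
  obtain ⟨M, hM⟩ := zorn_subset_nonempty {T | IsClique d δ T}
    (fun c hc hchain _ => ⟨⋃₀ c, fun x ⟨A, hA, hxA⟩ y ⟨B, hB, hyB⟩ => by
      rcases hchain.total hA hB with h | h
      · exact hc hB _ (h hxA) _ hyB
      · exact hc hA _ hxA _ (h hyB), fun A hA => Set.subset_sUnion_of_mem hA⟩) S hS
  exact ⟨M, hM.2.prop, hM.1, fun T hMT hT => (hM.2.eq_of_subset hT hMT)⟩

/-- Maximal-linkage clustering at a fixed scale `δ ≥ 0` is functorial: `ML_δ(X)` is
a non-nested cover of `X`, and for every non-expansive map `f` and every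
`S ∈ ML_δ(X)` there is `S' ∈ ML_δ(Y)` with `f(S) ⊆ S'` (refinement preservation). -/
theorem stmt_11 (δ : ℝ) (hδ : 0 ≤ δ)
    (X Y : Type) [Fintype X] [Fintype Y]
    (dX : X → X → ℝ≥0∞) (dY : Y → Y → ℝ≥0∞)
    (hX : IsUber dX) (hY : IsUber dY) :
    (∀ x : X, ∃ S ∈ MLδ dX δ, x ∈ S) ∧
    (∀ S ∈ MLδ dX δ, ∀ T ∈ MLδ dX δ, S ⊆ T → S = T) ∧
    (∀ f : X → Y, Nonexpansive dX dY f →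
      ∀ S ∈ MLδ dX δ, ∃ S' ∈ MLδ dY δ, f '' S ⊆ S') := by
  refine ⟨fun x => ?_, fun S hS T hT hST => hS.2 T hST hT.1, fun f hf S hS => ?_⟩
  · obtain ⟨M, hM, hxM, hmax⟩ := exists_max_clique dX δ {x}
      (by rintro a rfl b rfl; simp [hX.1])
    exact ⟨M, ⟨hM, hmax⟩, hxM rfl⟩
  · obtain ⟨M, hM, hsub, hmax⟩ := exists_max_clique dY δ (f '' S)
      (by rintro _ ⟨a, ha, rfl⟩ _ ⟨b, hb, rfl⟩; exact (hf a b).trans (hS.1 a ha b hb))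
    exact ⟨M, ⟨hM, hmax⟩, hsub⟩
end

section
/- In FinStoch, the Bayesian inverse construction is contravariantly functorial on supports: if f : X → Y and g : Y → Z are stochastic maps, π is a prior on X, and π' = f∗π is the pushforward prior on Y, then a Bayesian inverse of the composite g ∘ f with respect to π is given, almost everywhere with respect to the pushforward of π along g ∘ f, by the composite f†_π ∘ g†_{π'} of the Bayesian inverses of the factors. -/
open scoped BigOperators

/-- `f` is a stochastic map from `X` to `Y`, `f x y = f(y | x)`. -/
def IsStoch {X Y : Type} [Fintype Y] (f : X → Y → ℝ) : Prop :=
  (∀ x y, 0 ≤ f x y) ∧ (∀ x y, f x y ≤ 1) ∧ ∀ x, ∑ y, f x y = 1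

/-- Composition of stochastic maps: `(g ∘ f)(z | x) = Σ_y g(z | y) · f(y | x)`. -/
def compP {X Y Z : Type} [Fintype Y] (f : X → Y → ℝ) (g : Y → Z → ℝ) :
    X → Z → ℝ :=
  fun x z => ∑ y, g y z * f x y

/-- Pushforward of a prior: `(f∗π)(y) = Σ_x f(y|x) π(x)`. -/
def push {X Y : Type} [Fintype X] (f : X → Y → ℝ) (π : X → ℝ) : Y → ℝ :=
  fun y => ∑ x, f x y * π x

/-- Bayesian inversion is contravariantly functorial on supports: if `c` is a
Bayesian inverse of `f` w.r.t. `π` and `d` is a Bayesian inverse of `g` w.r.t. the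
pushforward prior `f∗π`, then the composite channel `f†_π ∘ g†_{f∗π}` satisfies the
Bayesian-inverse condition for `g ∘ f` w.r.t. `π` at every `z` in the support of the
pushforward of `π` along `g ∘ f`. -/
theorem stmt_14 {X Y Z : Type} [Fintype X] [Fintype Y] [Fintype Z]
    (f : X → Y → ℝ) (g : Y → Z → ℝ) (hf : IsStoch f) (hg : IsStoch g)
    (π : X → ℝ) (hπ0 : ∀ x, 0 ≤ π x) (hπ1 : ∑ x, π x = 1)
    (c : Y → X → ℝ) (hc : IsStoch c)
    (d : Z → Y → ℝ) (hd : IsStoch d)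
    (hcinv : ∀ x y, c y x * push f π y = f x y * π x)
    (hdinv : ∀ y z, d z y * push g (push f π) z = g y z * push f π y) :
    ∀ z, 0 < push (compP f g) π z →
      ∀ x, (∑ y, c y x * d z y) * push (compP f g) π z = compP f g x z * π x := by
  intro z _ x
  have hP : push (compP f g) π z = push g (push f π) z := by
    simp only [push, compP, Finset.sum_mul, Finset.mul_sum]
    rw [Finset.sum_comm]
    congr 1; ext y; congr 1; ext a; ring
  rw [hP, Finset.sum_mul]
  calc ∑ y, c y x * d z y * push g (push f π) z
      = ∑ y, c y x * (g y z * push f π y) := by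
        congr 1; ext y; rw [mul_assoc, hdinv]
    _ = ∑ y, g y z * (c y x * push f π y) := by congr 1; ext y; ring
    _ = ∑ y, g y z * (f x y * π x) := by simp only [hcinv]
    _ = compP f g x z * π x := by
        simp only [compP, Finset.sum_mul]; congr 1; ext y; ring
end
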